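/- arXiv:2108.06100 — 2 statements merged into one kernel-verified Lean document; each statement's English description precedes it below -/
import Mathlib

section
/- Every unital G-C*-algebra B admits a maximal G-invariant unital C*-subalgebra A such that the inclusion A ⊆ B is G-tight. -/
open scoped BoundedContinuousFunction ENNReal

/-- An element of a star ring is (formally) positive if it is of the form `b* * b`. -/
def StarPos {R : Type*} [NonUnitalSemiring R] [StarRing R] (a : R) : Prop :=
  ∃ b, a = star b * b

section UCP

variable {A B : Type*} [Ring A] [StarRing A] [Algebra ℂ A]
  [Ring B] [StarRing B] [Algebra ℂ B]

/-- A ℂ-linear map between unital star algebras is unital completely positive if it is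
unital and all its matrix amplifications preserve positivity. -/
def IsUCP (φ : A →ₗ[ℂ] B) : Prop :=
  φ 1 = 1 ∧ ∀ (n : ℕ) (M : Matrix (Fin n) (Fin n) A), StarPos M → StarPos (M.map φ)

/-- A unital positive ℂ-linear map between unital star algebras. -/
def IsUP (φ : A →ₗ[ℂ] B) : Prop :=
  φ 1 = 1 ∧ ∀ a : A, StarPos a → StarPos (φ a)

/-- Equivariance of a linear map with respect to actions of `G`. -/
def IsEquivariant (G : Type*) [SMul G A] [SMul G B] (φ : A →ₗ[ℂ] B) : Prop :=
  ∀ (g : G) (a : A), φ (g • a) = g • φ a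

/-- An inclusion (embedding) `ι : A → B` of `G`-operator algebras is `G`-tight if the only
`G`-equivariant ucp map `A → B` is the inclusion itself. -/
def IsTight (G : Type*) [SMul G A] [SMul G B] (ι : A →⋆ₐ[ℂ] B) : Prop :=
  ∀ φ : A →ₗ[ℂ] B, IsUCP φ → IsEquivariant G φ → φ = ι.toAlgHom.toLinearMap

end UCP

variable {G B : Type*} [Group G]
  [NormedRing B] [StarRing B] [CStarRing B] [NormedAlgebra ℂ B] [StarModule ℂ B]
  [MulSemiringAction G B]

/-- A `G`-invariant unital star subalgebra `S ⊆ B` is tightly included if the only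
`G`-equivariant ucp map `S → B` is the inclusion. -/
def SubTight (G : Type*) [Group G] {B : Type*}
    [NormedRing B] [StarRing B] [CStarRing B] [NormedAlgebra ℂ B] [StarModule ℂ B]
    [MulSemiringAction G B]
    (S : StarSubalgebra ℂ B) (hS : ∀ (g : G), ∀ b ∈ S, g • b ∈ S) : Prop :=
  ∀ φ : S →ₗ[ℂ] B, IsUCP φ →
    (∀ (g : G) (a : S), φ ⟨g • (a : B), hS g a a.2⟩ = g • φ a) →
    φ = S.subtype.toAlgHom.toLinearMap

/-!
Zorn's lemma applies to the invariant star subalgebras with tight inclusion once the family is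
nonempty and closed under unions of chains.

Since `G` acts only by ring automorphisms, `ℂ·1` need not be invariant; the starting point is
instead the smallest invariant star subalgebra `B₀`. If `φ : B₀ → B` is unital, `*`-preserving
and equivariant, the `a` with `φ (a * x) = a * φ x` and `φ (x * a) = φ x * a` for all `x` form an
invariant star subalgebra, hence all of `B₀`, and `x = 1` gives `φ a = a`.

For a chain, a ucp equivariant map on the union restricts to a ucp equivariant map on each member,
which is the inclusion there by tightness.
-/

theorem StarPos.isSelfAdjoint {R : Type*} [NonUnitalSemiring R] [StarRing R] {a : R}
    (ha : StarPos a) : IsSelfAdjoint a := by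
  obtain ⟨b, rfl⟩ := ha
  exact IsSelfAdjoint.star_mul_self b

theorem StarPos.matrix_map {R S F n : Type*} [Semiring R] [StarRing R] [Semiring S] [StarRing S]
    [Fintype n] [FunLike F R S] [RingHomClass F R S] [StarHomClass F R S] (f : F)
    {M : Matrix n n R} (hM : StarPos M) : StarPos (M.map f) := by
  obtain ⟨N, rfl⟩ := hM
  refine ⟨N.map f, ?_⟩
  rw [Matrix.map_mul, Matrix.star_eq_conjTranspose, Matrix.star_eq_conjTranspose,
    Matrix.conjTranspose_map f (map_star f)]

section UCP

variable {A C D : Type*} [Ring A] [StarRing A] [Algebra ℂ A] [Ring C] [StarRing C] [Algebra ℂ C]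
  [Ring D] [StarRing D] [Algebra ℂ D]

theorem IsUCP.map_star {φ : A →ₗ[ℂ] C} (hφ : IsUCP φ) (a : A) : φ (star a) = star (φ a) := by
  let M : Matrix (Fin 2) (Fin 2) A := !![1, a; star a, star a * a]
  have hM : StarPos M := ⟨!![1, a; 0, 0], by
    ext i j
    fin_cases i <;> fin_cases j <;> simp [M, Matrix.star_eq_conjTranspose, Matrix.mul_apply]⟩
  have hsa := (hφ.2 2 M hM).isSelfAdjoint
  simpa [M] using congrFun₂ hsa.symm 1 0

theorem IsUCP.comp_starAlgHom {φ : A →ₗ[ℂ] C} (hφ : IsUCP φ) (ι : D →⋆ₐ[ℂ] A) :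
    IsUCP (φ ∘ₗ ι.toAlgHom.toLinearMap) := by
  refine ⟨by simpa using hφ.1, fun n M hM => ?_⟩
  simpa [Matrix.map_map] using hφ.2 n (M.map ι) (hM.matrix_map ι)

end UCP

namespace StarSubalgebra

variable {R : Type*} [Ring R] [StarRing R] [Algebra ℂ R] [StarModule ℂ R] [MulSemiringAction G R]

variable (G) in
def IsInvariant (S : StarSubalgebra ℂ R) : Prop :=
  ∀ g : G, ∀ b ∈ S, g • b ∈ S

variable (G R) in
def minInvariant : StarSubalgebra ℂ R :=
  sInf {S | IsInvariant G S}

theorem isInvariant_minInvariant : IsInvariant G (minInvariant G R) := fun g b hb =>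
  mem_sInf.2 fun S hS => hS g b (mem_sInf.1 hb S hS)

theorem IsInvariant.minInvariant_le {S : StarSubalgebra ℂ R} (hS : IsInvariant G S) :
    minInvariant G R ≤ S :=
  sInf_le hS

theorem IsInvariant.iSup_of_directed {ι : Type*} [Nonempty ι] {S : ι → StarSubalgebra ℂ R}
    (dir : Directed (· ≤ ·) S) (hS : ∀ i, IsInvariant G (S i)) : IsInvariant G (⨆ i, S i) := by
  intro g b hb
  rw [← SetLike.mem_coe, coe_iSup_of_directed dir, Set.mem_iUnion] at hb ⊢
  obtain ⟨i, hi⟩ := hb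
  exact ⟨i, hS i g b hi⟩

def bimoduleDomain {S : StarSubalgebra ℂ R} (φ : S →ₗ[ℂ] R)
    (hφ : ∀ a, φ (star a) = star (φ a)) : StarSubalgebra ℂ S where
  carrier := {a | ∀ x, φ (a * x) = a * φ x ∧ φ (x * a) = φ x * a}
  mul_mem' {a b} ha hb x := by
    refine ⟨?_, ?_⟩
    · rw [mul_assoc, (ha _).1, (hb x).1, ← mul_assoc, ← MulMemClass.coe_mul]
    · rw [← mul_assoc, (hb _).2, (ha x).2, mul_assoc, ← MulMemClass.coe_mul]
  one_mem' x := by simp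
  add_mem' {a b} ha hb x := by
    simp only [add_mul, mul_add, map_add, (ha x).1, (hb x).1, (ha x).2, (hb x).2]
    push_cast
    simp only [add_mul, mul_add, and_self]
  zero_mem' x := by simp
  algebraMap_mem' c x := by simp [Algebra.algebraMap_eq_smul_one]
  star_mem' {a} ha x := by
    have hstar : ∀ y, star (φ (star y)) = φ y := fun y => by rw [← hφ, star_star]
    constructor
    · rw [show star a * x = star (star x * a) by simp, hφ, (ha _).2, star_mul, hstar,
        StarMemClass.coe_star]
    · rw [show x * star a = star (a * star x) by simp, hφ, (ha _).1, star_mul, hstar,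
        StarMemClass.coe_star]

theorem IsInvariant.map_bimoduleDomain {S : StarSubalgebra ℂ R} (hS : IsInvariant G S)
    {φ : S →ₗ[ℂ] R} (hφ : ∀ a, φ (star a) = star (φ a))
    (hequiv : ∀ (g : G) (a : S), φ ⟨g • (a : R), hS g a a.2⟩ = g • φ a) :
    IsInvariant G ((bimoduleDomain φ hφ).map S.subtype) := by
  rintro g _ ⟨a, ha, rfl⟩
  refine ⟨⟨g • (a : R), hS g a a.2⟩, fun x => ?_, rfl⟩
  let y : S := ⟨g⁻¹ • (x : R), hS g⁻¹ x x.2⟩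
  have hy : g • φ y = φ x := by rw [hequiv, smul_inv_smul]
  have hl : ⟨g • (a : R), hS g a a.2⟩ * x = (⟨g • ((a * y : S) : R), hS g _ (a * y).2⟩ : S) :=
    Subtype.ext (by simp [y, smul_mul'])
  have hr : x * ⟨g • (a : R), hS g a a.2⟩ = (⟨g • ((y * a : S) : R), hS g _ (y * a).2⟩ : S) :=
    Subtype.ext (by simp [y, smul_mul'])
  rw [hl, hr, hequiv, hequiv, (ha y).1, (ha y).2, smul_mul', smul_mul', hy]
  exact ⟨rfl, rfl⟩

theorem IsInvariant.apply_eq_self_of_mem_minInvariant {S : StarSubalgebra ℂ R}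
    (hS : IsInvariant G S) {φ : S →ₗ[ℂ] R} (hφ1 : φ 1 = 1) (hφ : ∀ a, φ (star a) = star (φ a))
    (hequiv : ∀ (g : G) (a : S), φ ⟨g • (a : R), hS g a a.2⟩ = g • φ a) {a : S}
    (ha : (a : R) ∈ minInvariant G R) : φ a = a := by
  obtain ⟨b, hb, hba⟩ := (hS.map_bimoduleDomain hφ hequiv).minInvariant_le ha
  obtain rfl : b = a := Subtype.ext hba
  simpa [hφ1] using (hb 1).1

end StarSubalgebra

open StarSubalgebra

theorem subTight_minInvariant : SubTight G (minInvariant G B) isInvariant_minInvariant :=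
  fun _ hφ hequiv => LinearMap.ext fun a =>
    isInvariant_minInvariant.apply_eq_self_of_mem_minInvariant hφ.1 hφ.map_star hequiv a.2

theorem SubTight.iSup_of_directed {ι : Type*} [Nonempty ι] {S : ι → StarSubalgebra ℂ B}
    (dir : Directed (· ≤ ·) S) (hS : ∀ i, IsInvariant G (S i))
    (htight : ∀ i, SubTight G (S i) (hS i)) :
    SubTight G (⨆ i, S i) (IsInvariant.iSup_of_directed dir hS) := by
  intro φ hφ hequiv
  ext ⟨x, hx⟩
  rw [← SetLike.mem_coe, coe_iSup_of_directed dir, Set.mem_iUnion] at hx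
  obtain ⟨i, hi⟩ := hx
  let ι := inclusion (le_iSup S i)
  have hres := htight i (φ ∘ₗ ι.toAlgHom.toLinearMap) (hφ.comp_starAlgHom ι)
    fun g a => hequiv g (ι a)
  exact LinearMap.congr_fun hres ⟨x, hi⟩

/-- Every unital `G`-C*-algebra `B` admits a maximal `G`-invariant unital
C*-subalgebra `A` with `A ⊆ B` `G`-tight. -/
theorem stmt_5 :
    ∃ (S : StarSubalgebra ℂ B) (hS : ∀ (g : G), ∀ b ∈ S, g • b ∈ S),
      SubTight G S hS ∧
      ∀ (T : StarSubalgebra ℂ B) (hT : ∀ (g : G), ∀ b ∈ T, g • b ∈ T),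
        SubTight G T hT → S ≤ T → S = T := by
  let tight : Set (StarSubalgebra ℂ B) := {S | ∃ hS : IsInvariant G S, SubTight G S hS}
  have chain_bound : ∀ c ⊆ tight, IsChain (· ≤ ·) c → ∀ S ∈ c, ∃ ub ∈ tight, ∀ T ∈ c, T ≤ ub := by
    intro c hc hchain S hS
    have : Nonempty c := ⟨⟨S, hS⟩⟩
    exact ⟨⨆ T : c, T.1,
      ⟨_, SubTight.iSup_of_directed hchain.directed (fun T => (hc T.2).fst) fun T => (hc T.2).snd⟩,
      fun T hT => le_iSup (fun T : c => T.1) ⟨T, hT⟩⟩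
  obtain ⟨M, -, ⟨hM, hMtight⟩, hmax⟩ :=
    zorn_le_nonempty₀ tight chain_bound _ ⟨_, subTight_minInvariant⟩
  exact ⟨M, hM, hMtight, fun T hT hTtight hle => le_antisymm hle (hmax ⟨hT, hTtight⟩ hle)⟩
end

section
/- Let G be a group and C ⊆ B a co-tight inclusion of G-operator algebras (i.e., there exists a G-tight inclusion A ⊆ B with B generated by A and C). If there exists a G-equivariant ucp map ψ: B → C, then C = B. Consequently a co-tight inclusion admits no proper intermediate G-invariant subalgebra D with a G-equivariant ucp map B → D; in particular no proper weakly Zimmer amenable or injective intermediate object exists. -/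
open scoped BoundedContinuousFunction ENNReal

/-!
Compose `ψ` with the two inclusions: `A → B → C → B` is a `G`-equivariant ucp map, so tightness
forces it to be the inclusion of `A`. Hence `A` lies in `C`, and `C`, being a closed star
subalgebra of `B` containing both generators, is all of `B`.
-/

section

variable {A B C : Type*} [Ring A] [StarRing A] [Algebra ℂ A]
  [Ring B] [StarRing B] [Algebra ℂ B] [Ring C] [StarRing C] [Algebra ℂ C]

theorem StarPos.matrix_map_s18 (f : A →⋆ₐ[ℂ] B) {n : ℕ} {M : Matrix (Fin n) (Fin n) A}
    (hM : StarPos M) : StarPos (M.map f) := by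
  obtain ⟨N, rfl⟩ := hM
  refine ⟨N.map f, ?_⟩
  ext i j
  simp [Matrix.mul_apply, Matrix.star_apply, map_sum, map_star]

theorem StarAlgHom.isUCP (f : A →⋆ₐ[ℂ] B) : IsUCP f.toAlgHom.toLinearMap :=
  ⟨map_one f, fun _ _ hM => StarPos.matrix_map_s18 f hM⟩

theorem IsUCP.comp {ψ : B →ₗ[ℂ] C} {φ : A →ₗ[ℂ] B} (hψ : IsUCP ψ) (hφ : IsUCP φ) :
    IsUCP (ψ ∘ₗ φ) := by
  refine ⟨by simp [hφ.1, hψ.1], fun n M hM => ?_⟩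
  have hcomp : M.map (ψ ∘ₗ φ) = (M.map φ).map ψ := (Matrix.map_map ..).symm
  rw [hcomp]
  exact hψ.2 n _ (hφ.2 n M hM)

end

theorem IsEquivariant.comp {G A B C : Type*} [Ring A] [Algebra ℂ A] [Ring B] [Algebra ℂ B]
    [Ring C] [Algebra ℂ C] [SMul G A] [SMul G B] [SMul G C]
    {ψ : B →ₗ[ℂ] C} {φ : A →ₗ[ℂ] B} (hψ : IsEquivariant G ψ) (hφ : IsEquivariant G φ) :
    IsEquivariant G (ψ ∘ₗ φ) := fun g a => by
  simp only [LinearMap.comp_apply, hφ g a, hψ g (φ a)]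

theorem IsTight.range_subset_of_ucp {G A B C : Type*}
    [Ring A] [StarRing A] [Algebra ℂ A] [Ring B] [StarRing B] [Algebra ℂ B]
    [Ring C] [StarRing C] [Algebra ℂ C] [SMul G A] [SMul G B] [SMul G C]
    {ιA : A →⋆ₐ[ℂ] B} (hA_eq : ∀ (g : G) (a : A), ιA (g • a) = g • ιA a)
    (htight : IsTight G ιA) {ιC : C →⋆ₐ[ℂ] B} (hC_eq : ∀ (g : G) (c : C), ιC (g • c) = g • ιC c)
    {ψ : B →ₗ[ℂ] C} (hψucp : IsUCP ψ) (hψeq : IsEquivariant G ψ) :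
    Set.range ιA ⊆ Set.range ιC := by
  have hucp := (ιC.isUCP.comp hψucp).comp ιA.isUCP
  have heq : IsEquivariant G ((ιC.toAlgHom.toLinearMap ∘ₗ ψ) ∘ₗ ιA.toAlgHom.toLinearMap) :=
    ((show IsEquivariant G ιC.toAlgHom.toLinearMap from hC_eq).comp hψeq).comp
      (show IsEquivariant G ιA.toAlgHom.toLinearMap from hA_eq)
  rintro _ ⟨a, rfl⟩
  exact ⟨ψ (ιA a), LinearMap.congr_fun (htight _ hucp heq) a⟩

theorem stmt_18_general {G A C B : Type*} [Group G]
    [NormedRing A] [StarRing A] [NormedAlgebra ℂ A]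
    [NormedRing C] [StarRing C] [NormedAlgebra ℂ C]
    [NormedRing B] [StarRing B] [NormedAlgebra ℂ B] [StarModule ℂ B]
    [MulSemiringAction G A] [MulSemiringAction G C] [MulSemiringAction G B]
    (ιA : A →⋆ₐ[ℂ] B) (hA_eq : ∀ (g : G) (a : A), ιA (g • a) = g • ιA a)
    (htight : IsTight G ιA)
    (ιC : C →⋆ₐ[ℂ] B)
    (hC_eq : ∀ (g : G) (c : C), ιC (g • c) = g • ιC c)
    (hC_closed : IsClosed (Set.range ιC))
    -- `B` is generated, as a C*-algebra, by (the images of) `A` and `C`: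
    (hgen : ∀ S : StarSubalgebra ℂ B, IsClosed (S : Set B) →
      Set.range ιA ⊆ S → Set.range ιC ⊆ S → S = ⊤)
    (ψ : B →ₗ[ℂ] C) (hψucp : IsUCP ψ) (hψeq : IsEquivariant G ψ) :
    Function.Surjective ιC := by
  have hrange : ιC.range = ⊤ :=
    hgen ιC.range hC_closed (htight.range_subset_of_ucp hA_eq hC_eq hψucp hψeq) subset_rfl
  exact fun b => (hrange ▸ StarSubalgebra.mem_top : b ∈ ιC.range)

/-- If `C ⊆ B` is a co-tight inclusion of `G`-operator algebras (there is a
`G`-tight inclusion `A ⊆ B` such that `B` is generated as a C*-algebra by `A` and `C`) and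
there is a `G`-equivariant ucp map `ψ : B → C`, then `C = B`. -/
theorem stmt_18 {G A C B : Type*} [Group G]
    [NormedRing A] [StarRing A] [CStarRing A] [NormedAlgebra ℂ A] [StarModule ℂ A]
    [NormedRing C] [StarRing C] [CStarRing C] [NormedAlgebra ℂ C] [StarModule ℂ C]
    [NormedRing B] [StarRing B] [CStarRing B] [NormedAlgebra ℂ B] [StarModule ℂ B]
    [MulSemiringAction G A] [MulSemiringAction G C] [MulSemiringAction G B]
    (ιA : A →⋆ₐ[ℂ] B) (hA_eq : ∀ (g : G) (a : A), ιA (g • a) = g • ιA a)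
    (htight : IsTight G ιA)
    (ιC : C →⋆ₐ[ℂ] B) (hC_inj : Function.Injective ιC)
    (hC_eq : ∀ (g : G) (c : C), ιC (g • c) = g • ιC c)
    (hC_closed : IsClosed (Set.range ιC))
    -- `B` is generated, as a C*-algebra, by (the images of) `A` and `C`:
    (hgen : ∀ S : StarSubalgebra ℂ B, IsClosed (S : Set B) →
      Set.range ιA ⊆ S → Set.range ιC ⊆ S → S = ⊤)
    (ψ : B →ₗ[ℂ] C) (hψucp : IsUCP ψ) (hψeq : IsEquivariant G ψ) :
    Function.Surjective ιC :=
  stmt_18_general ιA hA_eq htight ιC hC_eq hC_closed hgen ψ hψucp hψeq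
end
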